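/- arXiv:1801.07419 — 3 statements merged into one kernel-verified Lean document; each statement's English description precedes it below -/
import Mathlib

section
/- Suppose the nonnegative 3×3 channel strength matrix α satisfies conditions (C1) and (C2), and let αᵀ be its transpose, (αᵀ)_{im} = α_{mi}. Then αᵀ also satisfies conditions (C1) and (C2), and the region D computed from αᵀ equals the region D computed from α (duality of the GDoF region under switching the roles of transmit and receive antennas). -/
/-- `δ_i = max_m α_{im}`. -/
noncomputable def deltaI (α : Fin 3 → Fin 3 → ℝ) (i : Fin 3) : ℝ :=
  ⨆ m : Fin 3, α i m

/-- `δ_{i,j} = max_m (α_{im} − α_{jm})⁺`. -/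
noncomputable def deltaIJ (α : Fin 3 → Fin 3 → ℝ) (i j : Fin 3) : ℝ :=
  ⨆ m : Fin 3, max (α i m - α j m) 0

/-- `δ`: the minimum over all orderings `(i,j,k)` of `{1,2,3}` of
`min(δ_i + δ_{j,i} + δ_{k,j}, (δ_i + δ_k + δ_{i,j} + δ_{j,i} + δ_{j,k} + δ_{k,i})/2)`. -/
noncomputable def deltaTot (α : Fin 3 → Fin 3 → ℝ) : ℝ :=
  ⨅ p : Equiv.Perm (Fin 3),
    min (deltaI α (p 0) + deltaIJ α (p 1) (p 0) + deltaIJ α (p 2) (p 1))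
      ((deltaI α (p 0) + deltaI α (p 2) + deltaIJ α (p 0) (p 1) +
        deltaIJ α (p 1) (p 0) + deltaIJ α (p 1) (p 2) + deltaIJ α (p 2) (p 0)) / 2)

/-- The GDoF region `D`. -/
noncomputable def Dregion (α : Fin 3 → Fin 3 → ℝ) : Set (Fin 3 → ℝ) :=
  { d | (∀ i : Fin 3, 0 ≤ d i ∧ d i ≤ deltaI α i) ∧
        (∀ i k : Fin 3, i ≠ k →
          d i + d k ≤ min (deltaI α i + deltaIJ α k i) (deltaI α k + deltaIJ α i k)) ∧
        d 0 + d 1 + d 2 ≤ deltaTot α }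

/-- Condition (C1): `max(α_{im}, α_{ki}) ≤ α_{ii}`. -/
def CondC1 (α : Fin 3 → Fin 3 → ℝ) : Prop :=
  ∀ i k m : Fin 3, max (α i m) (α k i) ≤ α i i

/-- Condition (C2): `α_{ki} + α_{im} ≤ α_{ii} + α_{km}`. -/
def CondC2 (α : Fin 3 → Fin 3 → ℝ) : Prop :=
  ∀ i k m : Fin 3, α k i + α i m ≤ α i i + α k m

lemma deltaI_eq (α : Fin 3 → Fin 3 → ℝ) (h1 : CondC1 α) (i : Fin 3) :
    deltaI α i = α i i := by
  refine le_antisymm (ciSup_le fun m => ?_) (le_ciSup (Set.Finite.bddAbove (Set.finite_range _)) i)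
  exact le_trans (le_max_left _ _) (h1 i i m)

lemma deltaIJ_eq (α : Fin 3 → Fin 3 → ℝ) (h1 : CondC1 α) (h2 : CondC2 α) (i j : Fin 3) :
    deltaIJ α i j = α i i - α j i := by
  have hji : α j i ≤ α i i := le_trans (le_max_right _ _) (h1 i j i)
  refine le_antisymm (ciSup_le fun m => ?_) ?_
  · have := h2 i j m
    exact max_le (by linarith) (by linarith)
  · have h := le_ciSup (Set.Finite.bddAbove (Set.finite_range fun m => max (α i m - α j m) 0)) i
    calc α i i - α j i ≤ max (α i i - α j i) 0 := le_max_left _ _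
      _ ≤ _ := h

lemma condC1_transpose (α : Fin 3 → Fin 3 → ℝ) (h1 : CondC1 α) :
    CondC1 (fun i m => α m i) := by
  intro i k m
  exact max_le (le_trans (le_max_right _ _) (h1 i m m))
    (le_trans (le_max_left _ _) (h1 i i k))

lemma condC2_transpose (α : Fin 3 → Fin 3 → ℝ) (h2 : CondC2 α) :
    CondC2 (fun i m => α m i) := by
  intro i k m
  have := h2 i m k
  dsimp only
  linarith

lemma deltaTot_le_A (α : Fin 3 → Fin 3 → ℝ) (p : Equiv.Perm (Fin 3)) :
    deltaTot α ≤ deltaI α (p 0) + deltaIJ α (p 1) (p 0) + deltaIJ α (p 2) (p 1) :=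
  le_trans (ciInf_le (Set.Finite.bddBelow (Set.finite_range _)) p) (min_le_left _ _)

lemma deltaTot_le_B (α : Fin 3 → Fin 3 → ℝ) (p : Equiv.Perm (Fin 3)) :
    deltaTot α ≤ (deltaI α (p 0) + deltaI α (p 2) + deltaIJ α (p 0) (p 1) +
        deltaIJ α (p 1) (p 0) + deltaIJ α (p 1) (p 2) + deltaIJ α (p 2) (p 0)) / 2 :=
  le_trans (ciInf_le (Set.Finite.bddBelow (Set.finite_range _)) p) (min_le_right _ _)

lemma deltaTot_le_transpose (α : Fin 3 → Fin 3 → ℝ) (h1 : CondC1 α) (h2 : CondC2 α) :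
    deltaTot α ≤ deltaTot (fun i m => α m i) := by
  have h1' := condC1_transpose α h1
  have h2' := condC2_transpose α h2
  refine le_ciInf fun p => le_min ?_ ?_
  · have h := deltaTot_le_A α ((Equiv.swap (0 : Fin 3) 2).trans p)
    simp only [Equiv.trans_apply, Equiv.swap_apply_left, Equiv.swap_apply_right,
      Equiv.swap_apply_of_ne_of_ne (by decide : (1 : Fin 3) ≠ 0) (by decide : (1 : Fin 3) ≠ 2)] at h
    rw [deltaI_eq _ h1, deltaIJ_eq _ h1 h2, deltaIJ_eq _ h1 h2] at h
    rw [deltaI_eq _ h1', deltaIJ_eq _ h1' h2', deltaIJ_eq _ h1' h2']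
    linarith
  · have h := deltaTot_le_B α ((Equiv.swap (0 : Fin 3) 1).trans p)
    simp only [Equiv.trans_apply, Equiv.swap_apply_left, Equiv.swap_apply_right,
      Equiv.swap_apply_of_ne_of_ne (by decide : (2 : Fin 3) ≠ 0) (by decide : (2 : Fin 3) ≠ 1)] at h
    rw [deltaI_eq _ h1, deltaI_eq _ h1, deltaIJ_eq _ h1 h2, deltaIJ_eq _ h1 h2,
      deltaIJ_eq _ h1 h2, deltaIJ_eq _ h1 h2] at h
    rw [deltaI_eq _ h1', deltaI_eq _ h1', deltaIJ_eq _ h1' h2', deltaIJ_eq _ h1' h2',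
      deltaIJ_eq _ h1' h2', deltaIJ_eq _ h1' h2']
    linarith

/-- Duality: if (C1),(C2) hold for `α`, they also hold for `αᵀ`, and the
GDoF region computed from `αᵀ` equals the one computed from `α`. -/
theorem Dregion_transpose_duality (α : Fin 3 → Fin 3 → ℝ)
    (hα : ∀ i m : Fin 3, 0 ≤ α i m)
    (h1 : CondC1 α) (h2 : CondC2 α) :
    CondC1 (fun i m => α m i) ∧ CondC2 (fun i m => α m i) ∧
    Dregion (fun i m => α m i) = Dregion α := by
  have h1' := condC1_transpose α h1
  have h2' := condC2_transpose α h2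
  refine ⟨h1', h2', ?_⟩
  have hI : ∀ i, deltaI (fun i m => α m i) i = deltaI α i := fun i => by
    rw [deltaI_eq _ h1', deltaI_eq _ h1]
  have hmin : ∀ i k : Fin 3,
      min (deltaI α i + deltaIJ (fun i m => α m i) k i)
        (deltaI α k + deltaIJ (fun i m => α m i) i k)
      = min (deltaI α i + deltaIJ α k i) (deltaI α k + deltaIJ α i k) := by
    intro i k
    rw [deltaIJ_eq _ h1' h2', deltaIJ_eq _ h1' h2',
      deltaI_eq _ h1, deltaI_eq _ h1, deltaIJ_eq _ h1 h2, deltaIJ_eq _ h1 h2]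
    rw [min_comm]
    congr 1 <;> ring
  have hT : deltaTot (fun i m => α m i) = deltaTot α := by
    refine le_antisymm ?_ (deltaTot_le_transpose α h1 h2)
    exact deltaTot_le_transpose (fun i m => α m i) h1' h2'
  ext d
  simp only [Dregion, Set.mem_setOf_eq, hI, hmin, hT]
end

section
/- Suppose the nonnegative 3×3 channel strength matrix α satisfies conditions (C1) and (C2), that α_{12} = max_{l≠m} α_{lm}, and that max(α_{13}, α_{31}) ≤ α_{23}. Then D = D̂_{213}. -/
/-- `max_{l≠m} α_{lm}`: the largest cross-channel strength. -/
noncomputable def maxCross (α : Fin 3 → Fin 3 → ℝ) : ℝ :=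
  max (α 0 1) (max (α 0 2) (max (α 1 0) (max (α 1 2) (max (α 2 0) (α 2 1)))))

/-- The region `D̂_{ijk}` for an ordering `(i,j,k)` of the three users
(defined to be empty unless `max_{l≠m} α_{lm} ≤ min(α_{ii}, α_{jj})`). -/
noncomputable def Dhat (α : Fin 3 → Fin 3 → ℝ) (i j k : Fin 3) : Set (Fin 3 → ℝ) :=
  if maxCross α ≤ min (α i i) (α j j) then
    { d | 0 ≤ d 0 ∧ 0 ≤ d 1 ∧ 0 ≤ d 2 ∧
          d 0 ≤ α 0 0 ∧ d 1 ≤ α 1 1 ∧ d 2 ≤ α 2 2 ∧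
          d i + d j ≤ α i i + α j j - maxCross α ∧
          d i + d k ≤ α i i + α k k - max (α j k) (max (α k j) (max (α k i) (α i k))) ∧
          d j + d k ≤ α j j + α k k - max (α j k) (α k j) ∧
          d 0 + d 1 + d 2 ≤ α 0 0 + α 1 1 + α 2 2 -
            max (maxCross α + max (α j k) (α k j))
              (max (α i k + α k i) (max (α k i + α i j) (α j i + α i k))) }
  else ∅

/-- The region `F̂_{ijk}` for an ordering `(i,j,k)` of the three users
(defined to be empty unless `max_{l≠m} α_{lm} ≤ min(α_{ii}, α_{jj})`). -/
noncomputable def Fhat (α : Fin 3 → Fin 3 → ℝ) (i j k : Fin 3) : Set (Fin 3 → ℝ) :=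
  if maxCross α ≤ min (α i i) (α j j) then
    { d | 0 ≤ d 0 ∧ 0 ≤ d 1 ∧ 0 ≤ d 2 ∧
          d 0 ≤ α 0 0 ∧ d 1 ≤ α 1 1 ∧ d 2 ≤ α 2 2 ∧
          d i + d j ≤ α i i + α j j - maxCross α ∧
          d i + d k ≤ α i i + α k k - max (α j k) (max (α k i) (α i k)) ∧
          d j + d k ≤ α j j + α k k - max (α j k) (max (α k i) (α k j)) ∧
          d 0 + d 1 + d 2 ≤ α 0 0 + α 1 1 + α 2 2 -
            max (maxCross α + max (α k i) (α j k))
              (max (α i k + α j i) (max (α k j + α j i)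
                (max (α k j + α i k) ((α i j + α i k + α k j + α j i) / 2)))) }
  else ∅

/-!
Under (C1) and (C2) every maximum in the definitions of `δ_i` and `δ_{i,j}` is attained on the
diagonal: `δ_i = α_{ii}` and `δ_{i,j} = α_{ii} - α_{ji}`. Hence `D` is cut out by explicit linear
inequalities in the entries of `α`. When `α₁₂` is the largest cross link and
`max(α₁₃, α₃₁) ≤ α₂₃`, the sum bound of `D̂₂₁₃` is exactly what the orderings `(1,2,3)` and `(3,2,1)`
contribute to `δ`, and conversely every bound of `D` is a consequence of those of `D̂₂₁₃`.
Users are numbered from `0` in the code, so `α 0 1` is `α₁₂`.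
-/

theorem ciSup_eq_of_forall_le {ι β : Type*} [ConditionallyCompleteLattice β] {f : ι → β} {i : ι}
    (h : ∀ j, f j ≤ f i) : ⨆ j, f j = f i :=
  have : Nonempty ι := ⟨i⟩
  le_antisymm (ciSup_le h) (le_ciSup ⟨f i, Set.forall_mem_range.2 h⟩ i)

theorem sum_perm_fin_three {M : Type*} [AddCommMonoid M] (f : Fin 3 → M)
    (p : Equiv.Perm (Fin 3)) : f (p 0) + f (p 1) + f (p 2) = f 0 + f 1 + f 2 := by
  simpa only [Fin.sum_univ_three] using Equiv.sum_comp p f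

theorem Equiv.Perm.fin_three_cases (p : Equiv.Perm (Fin 3)) :
    (p 0 = 0 ∧ p 1 = 1 ∧ p 2 = 2) ∨ (p 0 = 0 ∧ p 1 = 2 ∧ p 2 = 1) ∨
    (p 0 = 1 ∧ p 1 = 0 ∧ p 2 = 2) ∨ (p 0 = 1 ∧ p 1 = 2 ∧ p 2 = 0) ∨
    (p 0 = 2 ∧ p 1 = 0 ∧ p 2 = 1) ∨ (p 0 = 2 ∧ p 1 = 1 ∧ p 2 = 0) := by
  have key : ∀ a b c : Fin 3, a ≠ b → a ≠ c → b ≠ c →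
      (a = 0 ∧ b = 1 ∧ c = 2) ∨ (a = 0 ∧ b = 2 ∧ c = 1) ∨ (a = 1 ∧ b = 0 ∧ c = 2) ∨
      (a = 1 ∧ b = 2 ∧ c = 0) ∨ (a = 2 ∧ b = 0 ∧ c = 1) ∨ (a = 2 ∧ b = 1 ∧ c = 0) := by
    decide
  exact key _ _ _ (p.injective.ne (by decide)) (p.injective.ne (by decide))
    (p.injective.ne (by decide))

section

variable {α : Fin 3 → Fin 3 → ℝ}

theorem CondC1.le_diag_of_row (h : CondC1 α) (i m : Fin 3) : α i m ≤ α i i :=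
  (le_max_left _ _).trans (h i i m)

theorem CondC1.le_diag_of_col (h : CondC1 α) (i k : Fin 3) : α k i ≤ α i i :=
  (le_max_right _ _).trans (h i k i)

theorem deltaI_eq_diag {i : Fin 3} (h : ∀ m, α i m ≤ α i i) : deltaI α i = α i i :=
  ciSup_eq_of_forall_le h

theorem deltaIJ_eq_diag_sub {i j : Fin 3} (hji : α j i ≤ α i i)
    (h : ∀ m, α j i + α i m ≤ α i i + α j m) : deltaIJ α i j = α i i - α j i := by
  have hpos : max (α i i - α j i) 0 = α i i - α j i := max_eq_left (sub_nonneg.2 hji)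
  rw [deltaIJ, ciSup_eq_of_forall_le (i := i) fun m => ?_, hpos]
  rw [hpos]
  exact max_le (by linarith [h m]) (sub_nonneg.2 hji)

theorem deltaI_eq_of_condC1 (h1 : CondC1 α) (i : Fin 3) : deltaI α i = α i i :=
  deltaI_eq_diag (h1.le_diag_of_row i)

theorem deltaIJ_eq_of_condC1_condC2 (h1 : CondC1 α) (h2 : CondC2 α) (i j : Fin 3) :
    deltaIJ α i j = α i i - α j i :=
  deltaIJ_eq_diag_sub (h1.le_diag_of_col i j) (h2 i j)

theorem le_deltaTot_iff (h1 : CondC1 α) (h2 : CondC2 α) {s : ℝ} :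
    s ≤ deltaTot α ↔ ∀ p : Equiv.Perm (Fin 3),
      s + α (p 0) (p 1) + α (p 1) (p 2) ≤ α 0 0 + α 1 1 + α 2 2 ∧
      2 * s + α (p 1) (p 0) + α (p 0) (p 1) + α (p 2) (p 1) + α (p 0) (p 2) ≤
        2 * (α 0 0 + α 1 1 + α 2 2) := by
  rw [deltaTot, le_ciInf_iff (Set.finite_range _).bddBelow]
  refine forall_congr' fun p => ?_
  have hdiag := sum_perm_fin_three (fun i => α i i) p
  simp only [le_min_iff, deltaI_eq_of_condC1 h1, deltaIJ_eq_of_condC1_condC2 h1 h2]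
  constructor <;> rintro ⟨h, h'⟩ <;> constructor <;> linarith

theorem mem_Dregion_iff (h1 : CondC1 α) (h2 : CondC2 α) {d : Fin 3 → ℝ} :
    d ∈ Dregion α ↔ (∀ i, 0 ≤ d i ∧ d i ≤ α i i) ∧
      (∀ i k, i ≠ k → d i + d k + α i k ≤ α i i + α k k) ∧
      ∀ p : Equiv.Perm (Fin 3),
        d 0 + d 1 + d 2 + α (p 0) (p 1) + α (p 1) (p 2) ≤ α 0 0 + α 1 1 + α 2 2 ∧
        2 * (d 0 + d 1 + d 2) + α (p 1) (p 0) + α (p 0) (p 1) + α (p 2) (p 1) +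
          α (p 0) (p 2) ≤ 2 * (α 0 0 + α 1 1 + α 2 2) := by
  simp only [Dregion, Set.mem_ofPred_eq, le_deltaTot_iff h1 h2, deltaI_eq_of_condC1 h1,
    deltaIJ_eq_of_condC1_condC2 h1 h2, le_min_iff]
  refine and_congr_right fun _ => and_congr_left fun _ => ⟨?_, ?_⟩
  · intro h i k hik
    linarith [(h i k hik).1]
  · intro h i k hik
    constructor <;> linarith [h i k hik, h k i hik.symm]

theorem cross_le_of_eq_maxCross (hmax : α 0 1 = maxCross α) :
    α 0 2 ≤ α 0 1 ∧ α 1 0 ≤ α 0 1 ∧ α 1 2 ≤ α 0 1 ∧ α 2 0 ≤ α 0 1 ∧ α 2 1 ≤ α 0 1 := by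
  rw [hmax]
  simp only [maxCross, le_max_iff, le_refl, true_or, or_true, and_self]

theorem maxCross_le_diag_of_eq (h1 : CondC1 α) (hmax : α 0 1 = maxCross α) :
    maxCross α ≤ min (α 1 1) (α 0 0) :=
  hmax ▸ le_min (h1.le_diag_of_col 1 0) (h1.le_diag_of_row 0 1)

variable (h1 : CondC1 α) (h2 : CondC2 α) (hmax : α 0 1 = maxCross α)
  (hcase : max (α 0 2) (α 2 0) ≤ α 1 2)
include h1 h2 hmax hcase

theorem Dregion_subset_Dhat213 : Dregion α ⊆ Dhat α 1 0 2 := by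
  intro d hd
  obtain ⟨hbox, hpair, hsum⟩ := (mem_Dregion_iff h1 h2).1 hd
  obtain ⟨-, -, -, -, x21⟩ := cross_le_of_eq_maxCross hmax
  have hc02 : α 0 2 ≤ α 1 2 := (le_max_left _ _).trans hcase
  have hc20 : α 2 0 ≤ α 1 2 := (le_max_right _ _).trans hcase
  have p01 := hpair 0 1 (by decide)
  have p02 := hpair 0 2 (by decide)
  have p20 := hpair 2 0 (by decide)
  have p12 := hpair 1 2 (by decide)
  have p21 := hpair 2 1 (by decide)
  have s012 := (hsum (Equiv.refl _)).1
  have s210 := (hsum (Equiv.swap 0 2)).1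
  simp only [Fin.isValue, Equiv.refl_apply, Equiv.swap_apply_left, Equiv.swap_apply_def,
    one_ne_zero, ↓reduceIte, Fin.reduceEq] at s012 s210
  rw [Dhat, if_pos (maxCross_le_diag_of_eq h1 hmax), Set.mem_ofPred_eq, ← hmax]
  refine ⟨(hbox 0).1, (hbox 1).1, (hbox 2).1, (hbox 0).2, (hbox 1).2, (hbox 2).2, by linarith,
    ?_, ?_, ?_⟩ <;> rw [le_sub_comm] <;> simp only [max_le_iff] <;> and_intros <;> linarith

theorem Dhat213_subset_Dregion : Dhat α 1 0 2 ⊆ Dregion α := by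
  intro d hd
  rw [Dhat, if_pos (maxCross_le_diag_of_eq h1 hmax), Set.mem_ofPred_eq, ← hmax] at hd
  obtain ⟨g0, g1, g2, g0', g1', g2', h10, h12, h02, hs⟩ := hd
  rw [le_sub_comm] at h12 h02 hs
  simp only [max_le_iff] at h12 h02 hs
  obtain ⟨x02, x10, x12, x20, x21⟩ := cross_le_of_eq_maxCross hmax
  have hc02 : α 0 2 ≤ α 1 2 := (le_max_left _ _).trans hcase
  have hc20 : α 2 0 ≤ α 1 2 := (le_max_right _ _).trans hcase
  refine (mem_Dregion_iff h1 h2).2 ⟨fun i => ?_, fun i k hik => ?_, fun p => ?_⟩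
  · fin_cases i <;> exact ⟨‹_›, ‹_›⟩
  · fin_cases i <;> fin_cases k <;>
      first | exact absurd rfl hik | simp only [Fin.zero_eta, Fin.mk_one, Fin.reduceFinMk]; linarith
  · rcases p.fin_three_cases with ⟨e0, e1, e2⟩ | ⟨e0, e1, e2⟩ | ⟨e0, e1, e2⟩ | ⟨e0, e1, e2⟩ |
      ⟨e0, e1, e2⟩ | ⟨e0, e1, e2⟩ <;> rw [e0, e1, e2] <;> constructor <;> linarith

end

theorem Dregion_eq_Dhat213_general (α : Fin 3 → Fin 3 → ℝ)
    (h1 : CondC1 α) (h2 : CondC2 α)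
    (hmax : α 0 1 = maxCross α) (hcase : max (α 0 2) (α 2 0) ≤ α 1 2) :
    Dregion α = Dhat α 1 0 2 :=
  (Dregion_subset_Dhat213 h1 h2 hmax hcase).antisymm (Dhat213_subset_Dregion h1 h2 hmax hcase)

/-- If `α₁₂` is the largest cross link and `max(α₁₃, α₃₁) ≤ α₂₃`, then under
(C1),(C2) the GDoF region `D` equals `D̂₂₁₃`. -/
theorem Dregion_eq_Dhat213 (α : Fin 3 → Fin 3 → ℝ)
    (hα : ∀ i m : Fin 3, 0 ≤ α i m) (h1 : CondC1 α) (h2 : CondC2 α)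
    (hmax : α 0 1 = maxCross α) (hcase : max (α 0 2) (α 2 0) ≤ α 1 2) :
    Dregion α = Dhat α 1 0 2 :=
  Dregion_eq_Dhat213_general α h1 h2 hmax hcase
end

section
/- Suppose the nonnegative 3×3 channel strength matrix α satisfies conditions (C1) and (C2). Then D equals the union, over all six orderings (i,j,k) of {1,2,3}, of D̂_{ijk} ∪ F̂_{ijk} (so the region D of the main theorem coincides with the overall simple layered superposition achievable region). -/
lemma maxCross_ge (α : Fin 3 → Fin 3 → ℝ) : ∀ l m : Fin 3, l ≠ m → α l m ≤ maxCross α := by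
  have g1 : α 0 1 ≤ maxCross α := le_max_left _ _
  have g2 : α 0 2 ≤ maxCross α := (le_max_left _ _).trans (le_max_right _ _)
  have g3 : α 1 0 ≤ maxCross α :=
    ((le_max_left _ _).trans (le_max_right _ _)).trans (le_max_right _ _)
  have g4 : α 1 2 ≤ maxCross α :=
    (((le_max_left _ _).trans (le_max_right _ _)).trans (le_max_right _ _)).trans (le_max_right _ _)
  have g5 : α 2 0 ≤ maxCross α :=
    ((((le_max_left _ _).trans (le_max_right _ _)).trans (le_max_right _ _)).trans
      (le_max_right _ _)).trans (le_max_right _ _)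
  have g6 : α 2 1 ≤ maxCross α :=
    ((((le_max_right _ _).trans (le_max_right _ _)).trans (le_max_right _ _)).trans
      (le_max_right _ _)).trans (le_max_right _ _)
  intro l m h
  fin_cases l <;> fin_cases m <;> simp_all

lemma maxCross_cases (α : Fin 3 → Fin 3 → ℝ) :
    maxCross α = α 0 1 ∨ maxCross α = α 0 2 ∨ maxCross α = α 1 0 ∨
    maxCross α = α 1 2 ∨ maxCross α = α 2 0 ∨ maxCross α = α 2 1 := by
  unfold maxCross
  rcases max_choice (α 0 1) (max (α 0 2) (max (α 1 0) (max (α 1 2) (max (α 2 0) (α 2 1))))) with h|h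
  · exact Or.inl h
  rw [h]
  rcases max_choice (α 0 2) (max (α 1 0) (max (α 1 2) (max (α 2 0) (α 2 1)))) with h|h
  · exact Or.inr (Or.inl h)
  rw [h]
  rcases max_choice (α 1 0) (max (α 1 2) (max (α 2 0) (α 2 1))) with h|h
  · exact Or.inr (Or.inr (Or.inl h))
  rw [h]
  rcases max_choice (α 1 2) (max (α 2 0) (α 2 1)) with h|h
  · exact Or.inr (Or.inr (Or.inr (Or.inl h)))
  rw [h]
  rcases max_choice (α 2 0) (α 2 1) with h|h
  · exact Or.inr (Or.inr (Or.inr (Or.inr (Or.inl h))))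
  · exact Or.inr (Or.inr (Or.inr (Or.inr (Or.inr h))))


lemma exists_perm : ∀ a b c : Fin 3, a ≠ b → b ≠ c → a ≠ c →
    ∃ p : Equiv.Perm (Fin 3), p 0 = a ∧ p 1 = b ∧ p 2 = c := by decide

lemma fin3_pairs : ∀ a b c u v : Fin 3, a≠b→b≠c→a≠c→u≠v→
    ((u=a∧v=b)∨(u=b∧v=a)∨(u=a∧v=c)∨(u=c∧v=a)∨(u=b∧v=c)∨(u=c∧v=b)) := by decide

lemma fin3_triples : ∀ a b c u v w : Fin 3, a≠b→b≠c→a≠c→u≠v→v≠w→u≠w→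
    ((u=a∧v=b∧w=c)∨(u=a∧v=c∧w=b)∨(u=b∧v=a∧w=c)∨(u=b∧v=c∧w=a)∨(u=c∧v=a∧w=b)∨(u=c∧v=b∧w=a)) := by decide

lemma le_sub_of_max_l {u A x y : ℝ} (h : u ≤ A - max x y) : u ≤ A - x := by
  have := le_max_left x y; linarith
lemma le_sub_of_max_r {u A x y : ℝ} (h : u ≤ A - max x y) : u ≤ A - y := by
  have := le_max_right x y; linarith
lemma le_sub_max {u A x y : ℝ} (hx : u ≤ A - x) (hy : u ≤ A - y) : u ≤ A - max x y := by
  rcases le_total x y with h|h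
  · rwa [max_eq_right h]
  · rwa [max_eq_left h]
lemma le_sub_add_max {u A z x y : ℝ} (hx : u ≤ A - (z + x)) (hy : u ≤ A - (z + y)) :
    u ≤ A - (z + max x y) := by
  rcases le_total x y with h|h
  · rwa [max_eq_right h]
  · rwa [max_eq_left h]

lemma Dregion_pair {α : Fin 3 → Fin 3 → ℝ} {d : Fin 3 → ℝ} (h1 : CondC1 α) (h2 : CondC2 α)
    (hd : d ∈ Dregion α) : ∀ u v : Fin 3, u ≠ v → d u + d v ≤ α u u + α v v - α u v := by
  intro u v huv
  have h := hd.2.1 u v huv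
  simp only [deltaI_eq α h1, deltaIJ_eq α h1 h2, le_min_iff] at h
  linarith [h.1]

lemma Dregion_sum {α : Fin 3 → Fin 3 → ℝ} {d : Fin 3 → ℝ} (h1 : CondC1 α) (h2 : CondC2 α)
    (hd : d ∈ Dregion α) : ∀ u v w : Fin 3, u ≠ v → v ≠ w → u ≠ w →
    d 0 + d 1 + d 2 ≤ α u u + α v v + α w w - α u v - α v w ∧
    d 0 + d 1 + d 2 ≤ α u u + α v v + α w w - (α u v + α v u + α u w + α w v) / 2 := by
  intro u v w huv hvw huw
  obtain ⟨p, hp0, hp1, hp2⟩ := exists_perm u v w huv hvw huw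
  have hT := hd.2.2
  have key : deltaTot α ≤
      min (deltaI α (p 0) + deltaIJ α (p 1) (p 0) + deltaIJ α (p 2) (p 1))
      ((deltaI α (p 0) + deltaI α (p 2) + deltaIJ α (p 0) (p 1) +
        deltaIJ α (p 1) (p 0) + deltaIJ α (p 1) (p 2) + deltaIJ α (p 2) (p 0)) / 2) :=
    ciInf_le (Set.Finite.bddBelow (Set.finite_range _)) p
  rw [hp0, hp1, hp2] at key
  simp only [deltaI_eq α h1, deltaIJ_eq α h1 h2, le_min_iff] at key
  constructor <;> linarith [key.1, key.2]

lemma mem_Dregion (α : Fin 3 → Fin 3 → ℝ) (d : Fin 3 → ℝ) (h1 : CondC1 α) (h2 : CondC2 α)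
    (a b c : Fin 3) (hab : a ≠ b) (hbc : b ≠ c) (hac : a ≠ c)
    (h0 : ∀ i, 0 ≤ d i) (hs1 : ∀ i, d i ≤ α i i)
    (pab : d a + d b ≤ α a a + α b b - α a b)
    (pba : d b + d a ≤ α b b + α a a - α b a)
    (pac : d a + d c ≤ α a a + α c c - α a c)
    (pca : d c + d a ≤ α c c + α a a - α c a)
    (pbc : d b + d c ≤ α b b + α c c - α b c)
    (pcb : d c + d b ≤ α c c + α b b - α c b)
    (t1 : d 0 + d 1 + d 2 ≤ α a a + α b b + α c c - α a b - α b c)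
    (t2 : d 0 + d 1 + d 2 ≤ α a a + α b b + α c c - α a c - α c b)
    (t3 : d 0 + d 1 + d 2 ≤ α a a + α b b + α c c - α b a - α a c)
    (t4 : d 0 + d 1 + d 2 ≤ α a a + α b b + α c c - α b c - α c a)
    (t5 : d 0 + d 1 + d 2 ≤ α a a + α b b + α c c - α c a - α a b)
    (t6 : d 0 + d 1 + d 2 ≤ α a a + α b b + α c c - α c b - α b a)
    (u1 : d 0 + d 1 + d 2 ≤ α a a + α b b + α c c - (α a b + α b a + α a c + α c b) / 2)
    (u2 : d 0 + d 1 + d 2 ≤ α a a + α b b + α c c - (α a c + α c a + α a b + α b c) / 2)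
    (u3 : d 0 + d 1 + d 2 ≤ α a a + α b b + α c c - (α b a + α a b + α b c + α c a) / 2)
    (u4 : d 0 + d 1 + d 2 ≤ α a a + α b b + α c c - (α b c + α c b + α b a + α a c) / 2)
    (u5 : d 0 + d 1 + d 2 ≤ α a a + α b b + α c c - (α c a + α a c + α c b + α b a) / 2)
    (u6 : d 0 + d 1 + d 2 ≤ α a a + α b b + α c c - (α c b + α b c + α c a + α a b) / 2) :
    d ∈ Dregion α := by
  refine ⟨fun i => ⟨h0 i, by rw [deltaI_eq α h1]; exact hs1 i⟩, ?_, ?_⟩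
  · intro u v huv
    rw [le_min_iff]
    simp only [deltaI_eq α h1, deltaIJ_eq α h1 h2]
    rcases fin3_pairs a b c u v hab hbc hac huv with
      ⟨rfl,rfl⟩|⟨rfl,rfl⟩|⟨rfl,rfl⟩|⟨rfl,rfl⟩|⟨rfl,rfl⟩|⟨rfl,rfl⟩ <;>
      exact ⟨by linarith, by linarith⟩
  · apply le_ciInf
    intro p
    have h01 : p 0 ≠ p 1 := fun h => absurd (p.injective h) (by decide)
    have h12 : p 1 ≠ p 2 := fun h => absurd (p.injective h) (by decide)
    have h02 : p 0 ≠ p 2 := fun h => absurd (p.injective h) (by decide)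
    rw [le_min_iff]
    simp only [deltaI_eq α h1, deltaIJ_eq α h1 h2]
    rcases fin3_triples a b c (p 0) (p 1) (p 2) hab hbc hac h01 h12 h02 with
      ⟨e1,e2,e3⟩|⟨e1,e2,e3⟩|⟨e1,e2,e3⟩|⟨e1,e2,e3⟩|⟨e1,e2,e3⟩|⟨e1,e2,e3⟩ <;>
      rw [e1, e2, e3] <;> exact ⟨by linarith, by linarith⟩


section Helpers

variable (α : Fin 3 → Fin 3 → ℝ)

lemma diag_sum (a b c : Fin 3) (hab : a ≠ b) (hbc : b ≠ c) (hac : a ≠ c) :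
    α a a + α b b + α c c = α 0 0 + α 1 1 + α 2 2 := by
  rcases fin3_triples a b c 0 1 2 hab hbc hac (by decide) (by decide) (by decide) with
    ⟨e1,e2,e3⟩|⟨e1,e2,e3⟩|⟨e1,e2,e3⟩|⟨e1,e2,e3⟩|⟨e1,e2,e3⟩|⟨e1,e2,e3⟩ <;>
    rw [← e1, ← e2, ← e3] <;> ring

end Helpers

lemma Dhat_subset (α : Fin 3 → Fin 3 → ℝ) (d : Fin 3 → ℝ) (h1 : CondC1 α) (h2 : CondC2 α)
    (a b c : Fin 3) (hab : a ≠ b) (hbc : b ≠ c) (hac : a ≠ c)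
    (hd : d ∈ Dhat α a b c) : d ∈ Dregion α := by
  simp only [Dhat] at hd
  split_ifs at hd with hcond
  · simp only [Set.mem_setOf_eq] at hd
    obtain ⟨g0, g1, g2, s0, s1, s2, q7, q8, q9, q10⟩ := hd
    have mcab := maxCross_ge α a b hab
    have mcba := maxCross_ge α b a hab.symm
    have mcac := maxCross_ge α a c hac
    have mcca := maxCross_ge α c a hac.symm
    have mcbc := maxCross_ge α b c hbc
    have mccb := maxCross_ge α c b hbc.symm
    have e8bc := le_sub_of_max_l q8
    have e8cb := le_sub_of_max_l (le_sub_of_max_r q8)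
    have e8ca := le_sub_of_max_l (le_sub_of_max_r (le_sub_of_max_r q8))
    have e8ac := le_sub_of_max_r (le_sub_of_max_r (le_sub_of_max_r q8))
    have e9bc := le_sub_of_max_l q9
    have e9cb := le_sub_of_max_r q9
    have r1 := le_sub_of_max_l q10
    have r2 := le_sub_of_max_l (le_sub_of_max_r q10)
    have r3 := le_sub_of_max_l (le_sub_of_max_r (le_sub_of_max_r q10))
    have r4 := le_sub_of_max_r (le_sub_of_max_r (le_sub_of_max_r q10))
    have rbc : d 0 + d 1 + d 2 ≤ α 0 0 + α 1 1 + α 2 2 - maxCross α - α b c := by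
      have := le_max_left (α b c) (α c b); linarith
    have rcb : d 0 + d 1 + d 2 ≤ α 0 0 + α 1 1 + α 2 2 - maxCross α - α c b := by
      have := le_max_right (α b c) (α c b); linarith
    have hS := diag_sum α a b c hab hbc hac
    have hsing : ∀ i : Fin 3, 0 ≤ d i ∧ d i ≤ α i i := by
      intro i; fin_cases i
      · exact ⟨g0, s0⟩
      · exact ⟨g1, s1⟩
      · exact ⟨g2, s2⟩
    refine mem_Dregion α d h1 h2 a b c hab hbc hac (fun i => (hsing i).1) (fun i => (hsing i).2)
      ?_ ?_ ?_ ?_ ?_ ?_ ?_ ?_ ?_ ?_ ?_ ?_ ?_ ?_ ?_ ?_ ?_ ?_ <;>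
      linarith [q7, e8bc, e8cb, e8ca, e8ac, e9bc, e9cb, rbc, rcb, r2, r3, r4, hS,
        mcab, mcba, mcac, mcca, mcbc, mccb]
  · exact absurd hd (Set.notMem_empty d)

lemma Fhat_subset (α : Fin 3 → Fin 3 → ℝ) (d : Fin 3 → ℝ) (h1 : CondC1 α) (h2 : CondC2 α)
    (a b c : Fin 3) (hab : a ≠ b) (hbc : b ≠ c) (hac : a ≠ c)
    (hd : d ∈ Fhat α a b c) : d ∈ Dregion α := by
  simp only [Fhat] at hd
  split_ifs at hd with hcond
  · simp only [Set.mem_setOf_eq] at hd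
    obtain ⟨g0, g1, g2, s0, s1, s2, q7, q8, q9, q10⟩ := hd
    have mcab := maxCross_ge α a b hab
    have mcba := maxCross_ge α b a hab.symm
    have mcac := maxCross_ge α a c hac
    have mcca := maxCross_ge α c a hac.symm
    have mcbc := maxCross_ge α b c hbc
    have mccb := maxCross_ge α c b hbc.symm
    have e8bc := le_sub_of_max_l q8
    have e8ca := le_sub_of_max_l (le_sub_of_max_r q8)
    have e8ac := le_sub_of_max_r (le_sub_of_max_r q8)
    have e9bc := le_sub_of_max_l q9
    have e9ca := le_sub_of_max_l (le_sub_of_max_r q9)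
    have e9cb := le_sub_of_max_r (le_sub_of_max_r q9)
    have r1 := le_sub_of_max_l q10
    have r2 := le_sub_of_max_l (le_sub_of_max_r q10)
    have r3 := le_sub_of_max_l (le_sub_of_max_r (le_sub_of_max_r q10))
    have r4 := le_sub_of_max_l (le_sub_of_max_r (le_sub_of_max_r (le_sub_of_max_r q10)))
    have r5 := le_sub_of_max_r (le_sub_of_max_r (le_sub_of_max_r (le_sub_of_max_r q10)))
    have rca : d 0 + d 1 + d 2 ≤ α 0 0 + α 1 1 + α 2 2 - maxCross α - α c a := by
      have := le_max_left (α c a) (α b c); linarith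
    have rbc : d 0 + d 1 + d 2 ≤ α 0 0 + α 1 1 + α 2 2 - maxCross α - α b c := by
      have := le_max_right (α c a) (α b c); linarith
    have hS := diag_sum α a b c hab hbc hac
    have hsing : ∀ i : Fin 3, 0 ≤ d i ∧ d i ≤ α i i := by
      intro i; fin_cases i
      · exact ⟨g0, s0⟩
      · exact ⟨g1, s1⟩
      · exact ⟨g2, s2⟩
    refine mem_Dregion α d h1 h2 a b c hab hbc hac (fun i => (hsing i).1) (fun i => (hsing i).2)
      ?_ ?_ ?_ ?_ ?_ ?_ ?_ ?_ ?_ ?_ ?_ ?_ ?_ ?_ ?_ ?_ ?_ ?_ <;>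
      linarith [q7, e8bc, e8ca, e8ac, e9bc, e9ca, e9cb, rca, rbc, r2, r3, r4, r5, hS,
        mcab, mcba, mcac, mcca, mcbc, mccb]
  · exact absurd hd (Set.notMem_empty d)


lemma mem_Fhat (α : Fin 3 → Fin 3 → ℝ) (d : Fin 3 → ℝ) (h1 : CondC1 α) (h2 : CondC2 α)
    (a b c : Fin 3) (hab : a ≠ b) (hbc : b ≠ c) (hac : a ≠ c)
    (hX : maxCross α = α a b) (hd : d ∈ Dregion α)
    (hF1 : d a + d c ≤ α a a + α c c - α b c)
    (hF2 : d b + d c ≤ α b b + α c c - α c a) :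
    d ∈ Fhat α a b c := by
  have hp := Dregion_pair h1 h2 hd
  have hsum := Dregion_sum h1 h2 hd
  have tA := hsum a b c hab hbc hac
  have tB := hsum a c b hac hbc.symm hab
  have tC := hsum b a c hab.symm hac hbc
  have tF := hsum c b a hbc.symm hab.symm hac.symm
  have tE := hsum c a b hac.symm hab hbc.symm
  have hS := diag_sum α a b c hab hbc hac
  have hcond : maxCross α ≤ min (α a a) (α b b) := by
    rw [hX]
    exact le_min ((le_max_left _ _).trans (h1 a a b)) ((le_max_right _ _).trans (h1 b a b))
  have s0 : d 0 ≤ α 0 0 := by have := (hd.1 0).2; rwa [deltaI_eq α h1] at this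
  have s1 : d 1 ≤ α 1 1 := by have := (hd.1 1).2; rwa [deltaI_eq α h1] at this
  have s2 : d 2 ≤ α 2 2 := by have := (hd.1 2).2; rwa [deltaI_eq α h1] at this
  simp only [Fhat, if_pos hcond, Set.mem_setOf_eq]
  refine ⟨(hd.1 0).1, (hd.1 1).1, (hd.1 2).1, s0, s1, s2, ?_, ?_, ?_, ?_⟩
  · rw [hX]; linarith [hp a b hab]
  · exact le_sub_max hF1 (le_sub_max (by linarith [hp c a hac.symm]) (hp a c hac))
  · exact le_sub_max (hp b c hbc) (le_sub_max hF2 (by linarith [hp c b hbc.symm]))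
  · refine le_sub_max (le_sub_add_max ?_ ?_) (le_sub_max ?_ (le_sub_max ?_ (le_sub_max ?_ ?_)))
    · linarith [tE.1, hX, hS]
    · linarith [tA.1, hX, hS]
    · linarith [tC.1, hS]
    · linarith [tF.1, hS]
    · linarith [tB.1, hS]
    · linarith [tA.2, hS]

lemma mem_Dhat_C (α : Fin 3 → Fin 3 → ℝ) (d : Fin 3 → ℝ) (h1 : CondC1 α) (h2 : CondC2 α)
    (a b c : Fin 3) (hab : a ≠ b) (hbc : b ≠ c) (hac : a ≠ c)
    (hX : maxCross α = α a b) (hd : d ∈ Dregion α)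
    (hbcca : α b c ≤ α c a) (hcbca : α c b ≤ α c a) :
    d ∈ Dhat α a b c := by
  have hp := Dregion_pair h1 h2 hd
  have hsum := Dregion_sum h1 h2 hd
  have tC := hsum b a c hab.symm hac hbc
  have tE := hsum c a b hac.symm hab hbc.symm
  have hS := diag_sum α a b c hab hbc hac
  have mcac := maxCross_ge α a c hac
  have hcond : maxCross α ≤ min (α a a) (α b b) := by
    rw [hX]
    exact le_min ((le_max_left _ _).trans (h1 a a b)) ((le_max_right _ _).trans (h1 b a b))
  have s0 : d 0 ≤ α 0 0 := by have := (hd.1 0).2; rwa [deltaI_eq α h1] at this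
  have s1 : d 1 ≤ α 1 1 := by have := (hd.1 1).2; rwa [deltaI_eq α h1] at this
  have s2 : d 2 ≤ α 2 2 := by have := (hd.1 2).2; rwa [deltaI_eq α h1] at this
  simp only [Dhat, if_pos hcond, Set.mem_setOf_eq]
  refine ⟨(hd.1 0).1, (hd.1 1).1, (hd.1 2).1, s0, s1, s2, ?_, ?_, ?_, ?_⟩
  · rw [hX]; linarith [hp a b hab]
  · refine le_sub_max ?_ (le_sub_max ?_ (le_sub_max ?_ ?_))
    · linarith [hp c a hac.symm]
    · linarith [hp c a hac.symm]
    · linarith [hp c a hac.symm]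
    · exact hp a c hac
  · exact le_sub_max (hp b c hbc) (by linarith [hp c b hbc.symm])
  · refine le_sub_max (le_sub_add_max ?_ ?_) (le_sub_max ?_ (le_sub_max ?_ ?_))
    · linarith [tE.1, hX, hS]
    · linarith [tE.1, hX, hS]
    · linarith [tE.1, hX, hS, mcac]
    · linarith [tE.1, hS]
    · linarith [tC.1, hS]

lemma mem_Dhat_B (α : Fin 3 → Fin 3 → ℝ) (d : Fin 3 → ℝ) (h1 : CondC1 α) (h2 : CondC2 α)
    (a b c : Fin 3) (hab : a ≠ b) (hbc : b ≠ c) (hac : a ≠ c)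
    (hX : maxCross α = α a b) (hd : d ∈ Dregion α)
    (hacbc : α a c ≤ α b c) (hcabc : α c a ≤ α b c) :
    d ∈ Dhat α b a c := by
  have hp := Dregion_pair h1 h2 hd
  have hsum := Dregion_sum h1 h2 hd
  have tA := hsum a b c hab hbc hac
  have tF := hsum c b a hbc.symm hab.symm hac.symm
  have hS := diag_sum α a b c hab hbc hac
  have mccb := maxCross_ge α c b hbc.symm
  have hcond : maxCross α ≤ min (α b b) (α a a) := by
    rw [hX]
    exact le_min ((le_max_right _ _).trans (h1 b a b)) ((le_max_left _ _).trans (h1 a a b))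
  have s0 : d 0 ≤ α 0 0 := by have := (hd.1 0).2; rwa [deltaI_eq α h1] at this
  have s1 : d 1 ≤ α 1 1 := by have := (hd.1 1).2; rwa [deltaI_eq α h1] at this
  have s2 : d 2 ≤ α 2 2 := by have := (hd.1 2).2; rwa [deltaI_eq α h1] at this
  simp only [Dhat, if_pos hcond, Set.mem_setOf_eq]
  refine ⟨(hd.1 0).1, (hd.1 1).1, (hd.1 2).1, s0, s1, s2, ?_, ?_, ?_, ?_⟩
  · rw [hX]; linarith [hp a b hab]
  · refine le_sub_max ?_ (le_sub_max ?_ (le_sub_max ?_ ?_))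
    · linarith [hp b c hbc]
    · linarith [hp b c hbc]
    · linarith [hp c b hbc.symm]
    · exact hp b c hbc
  · exact le_sub_max (hp a c hac) (by linarith [hp c a hac.symm])
  · refine le_sub_max (le_sub_add_max ?_ ?_) (le_sub_max ?_ (le_sub_max ?_ ?_))
    · linarith [tA.1, hX, hS]
    · linarith [tA.1, hX, hS]
    · linarith [tA.1, hX, hS, mccb]
    · linarith [tF.1, hS]
    · linarith [tA.1, hS]

lemma forward_case (α : Fin 3 → Fin 3 → ℝ) (d : Fin 3 → ℝ) (h1 : CondC1 α) (h2 : CondC2 α)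
    (a b c : Fin 3) (hab : a ≠ b) (hbc : b ≠ c) (hac : a ≠ c)
    (hX : maxCross α = α a b) (hd : d ∈ Dregion α) :
    ∃ i j k : Fin 3, i ≠ j ∧ j ≠ k ∧ i ≠ k ∧ d ∈ Dhat α i j k ∪ Fhat α i j k := by
  have hp := Dregion_pair h1 h2 hd
  by_cases hF1 : d a + d c ≤ α a a + α c c - α b c
  · by_cases hF2 : d b + d c ≤ α b b + α c c - α c a
    · exact ⟨a, b, c, hab, hbc, hac,
        Or.inr (mem_Fhat α d h1 h2 a b c hab hbc hac hX hd hF1 hF2)⟩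
    · push_neg at hF2
      exact ⟨a, b, c, hab, hbc, hac,
        Or.inl (mem_Dhat_C α d h1 h2 a b c hab hbc hac hX hd
          (by linarith [hp b c hbc]) (by linarith [hp c b hbc.symm]))⟩
  · push_neg at hF1
    exact ⟨b, a, c, hab.symm, hac, hbc,
      Or.inl (mem_Dhat_B α d h1 h2 a b c hab hbc hac hX hd
        (by linarith [hp a c hac]) (by linarith [hp c a hac.symm]))⟩


/-- Under (C1),(C2), the GDoF region `D` equals the union, over all six orderings
`(i,j,k)` of the three users, of `D̂_{ijk} ∪ F̂_{ijk}` — i.e. the overall SLS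
achievable region. -/
theorem Dregion_eq_union_Dhat_Fhat (α : Fin 3 → Fin 3 → ℝ)
    (hα : ∀ i m : Fin 3, 0 ≤ α i m) (h1 : CondC1 α) (h2 : CondC2 α) :
    Dregion α = { d : Fin 3 → ℝ | ∃ i j k : Fin 3, i ≠ j ∧ j ≠ k ∧ i ≠ k ∧
      d ∈ Dhat α i j k ∪ Fhat α i j k } := by
  ext d
  simp only [Set.mem_setOf_eq]
  constructor
  · intro hd
    rcases maxCross_cases α with hX|hX|hX|hX|hX|hX
    · exact forward_case α d h1 h2 0 1 2 (by decide) (by decide) (by decide) hX hd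
    · exact forward_case α d h1 h2 0 2 1 (by decide) (by decide) (by decide) hX hd
    · exact forward_case α d h1 h2 1 0 2 (by decide) (by decide) (by decide) hX hd
    · exact forward_case α d h1 h2 1 2 0 (by decide) (by decide) (by decide) hX hd
    · exact forward_case α d h1 h2 2 0 1 (by decide) (by decide) (by decide) hX hd
    · exact forward_case α d h1 h2 2 1 0 (by decide) (by decide) (by decide) hX hd
  · rintro ⟨i, j, k, hij, hjk, hik, hm | hm⟩
    · exact Dhat_subset α d h1 h2 i j k hij hjk hik hm
    · exact Fhat_subset α d h1 h2 i j k hij hjk hik hm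
end
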